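/- Let (X, Y) be a pair of real random variables on a probability space with X > 0 almost surely, E[X] < ∞ and E[X⁻¹] < ∞. Let F(y) = P(Y ≤ y), and for α = ±1 define T_α(y) = E[X^α 1{Y ≤ y}]. Suppose there is a constant M such that E[X | σ(Y)] ≤ M and E[X⁻¹ | σ(Y)] ≤ M almost surely. Fix constants f ∈ (0, 1) and d > 0, and define the covariance kernels C₁(y, t) = (E[X] · T₋₁(min(y,t)) − f · F(min(y,t))) − (f³/d) · (T₁(y)/E[X] − F(y)) · (T₁(t)/E[X] − F(t)) − E[X] · (T₋₁(y) F(t) + T₋₁(t) F(y) − (E[X⁻¹] + 1) F(y) F(t)), C₂(y, t) = F(min(y,t)) − F(y) F(t), and C(y, t) = C₁(y, t) + f · C₂(y, t). Then there exists a constant K > 0 such that for all y ≤ t, C(y, y) + C(t, t) − 2 C(y, t) ≤ K · (F(t) − F(y)). -/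

import Mathlib

/-!
Write `ΔF = F t − F y` and `ΔT = T₋₁(t) − T₋₁(y)`. Expanding the kernel, the increment equals
`E[X] ΔT (1 − 2 ΔF) − (f³/d) (Δ(T₁/E[X] − F))² + (E[X](E[X⁻¹] + 1) − f) ΔF²`.
The middle term is nonpositive and `0 ≤ ΔF ≤ 1`, so only `0 ≤ ΔT ≤ M ΔF` is needed; it holds
because `ΔT` is the integral of `X⁻¹` over the `σ(Y)`-measurable slice `{y < Y ≤ t}`, on which
`X⁻¹` may be replaced by its conditional expectation given `Y`.
-/

open MeasureTheory Set

section Slices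

variable {Ω : Type*} [MeasurableSpace Ω] {μ : Measure Ω} {Y : Ω → ℝ} {y t : ℝ}

lemma measureReal_preimage_Iic_sub [IsFiniteMeasure μ] (hY : Measurable Y) (hyt : y ≤ t) :
    μ.real (Y ⁻¹' Iic t) - μ.real (Y ⁻¹' Iic y) = μ.real (Y ⁻¹' Ioc y t) := by
  rw [← Iic_sdiff_Iic, preimage_sdiff,
    measureReal_sdiff (preimage_mono (Iic_subset_Iic.2 hyt)) (hY measurableSet_Iic)]

lemma integral_ite_le_sub {g : Ω → ℝ} (hY : Measurable Y) (hg : Integrable g μ) (hyt : y ≤ t) :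
    (∫ ω, (if Y ω ≤ t then g ω else 0) ∂μ) - ∫ ω, (if Y ω ≤ y then g ω else 0) ∂μ
      = ∫ ω in Y ⁻¹' Ioc y t, g ω ∂μ := by
  have h_ite (u : ℝ) : ∫ ω, (if Y ω ≤ u then g ω else 0) ∂μ = ∫ ω in Y ⁻¹' Iic u, g ω ∂μ :=
    integral_indicator (hY measurableSet_Iic)
  rw [h_ite, h_ite, ← Iic_sdiff_Iic, preimage_sdiff,
    setIntegral_sdiff (hY measurableSet_Iic) hg.integrableOn
      (preimage_mono (Iic_subset_Iic.2 hyt))]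

end Slices

lemma setIntegral_le_of_condExp_le {Ω : Type*} {m m₀ : MeasurableSpace Ω} {μ : Measure Ω}
    [IsFiniteMeasure μ] (hm : m ≤ m₀) {g : Ω → ℝ} (hg : Integrable g μ) {M : ℝ}
    (hM : ∀ᵐ ω ∂μ, μ[g | m] ω ≤ M) {s : Set Ω} (hs : MeasurableSet[m] s) :
    ∫ ω in s, g ω ∂μ ≤ M * μ.real s := by
  calc ∫ ω in s, g ω ∂μ = ∫ ω in s, μ[g | m] ω ∂μ := (setIntegral_condExp hm hg hs).symm
    _ ≤ ∫ _ in s, M ∂μ := setIntegral_mono_ae integrable_condExp.integrableOn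
        (integrableOn_const (measure_ne_top μ s)) hM
    _ = M * μ.real s := by rw [setIntegral_const, smul_eq_mul, mul_comm]

lemma kernel_increment_le {A u v m c q : ℝ} (hA : 0 ≤ A) (hu : 0 ≤ u) (hum : u ≤ m * v)
    (hv : 0 ≤ v) (hv1 : v ≤ 1) (hq : 0 ≤ q) :
    A * u * (1 - 2 * v) - q + c * v ^ 2 ≤ (A * m + |c|) * v := by
  have hAu : A * u * (1 - 2 * v) ≤ A * m * v := by
    nlinarith [mul_le_mul_of_nonneg_left hum hA, mul_nonneg (mul_nonneg hA hu) hv]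
  have hc : c * v ^ 2 ≤ |c| * v := by
    nlinarith [mul_le_mul_of_nonneg_right (le_abs_self c) (sq_nonneg v),
      mul_nonneg (abs_nonneg c) (mul_nonneg hv (sub_nonneg.2 hv1))]
  linarith

theorem covariance_kernel_increment_bound_general
    {Ω : Type*} [MeasurableSpace Ω] (P : Measure Ω) [IsProbabilityMeasure P]
    (X Y : Ω → ℝ) (hY : Measurable Y)
    (hXpos : ∀ᵐ ω ∂P, 0 < X ω)
    (hXinvint : Integrable (fun ω => (X ω)⁻¹) P)
    (M : ℝ)
    (hboundm1 : ∀ᵐ ω ∂P,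
      (P[(fun ω => (X ω)⁻¹) | MeasurableSpace.comap Y Real.measurableSpace]) ω ≤ M)
    (f d : ℝ) (hf : f ∈ Set.Ioo (0:ℝ) 1) (hd : 0 < d)
    (F : ℝ → ℝ) (hF : ∀ y, F y = (P {ω | Y ω ≤ y}).toReal)
    (T₁ : ℝ → ℝ)
    (Tneg : ℝ → ℝ) (hTneg : ∀ y, Tneg y = ∫ ω, (if Y ω ≤ y then (X ω)⁻¹ else 0) ∂P)
    (C₁ : ℝ → ℝ → ℝ)
    (hC₁ : ∀ y t, C₁ y t =
      ((∫ ω, X ω ∂P) * Tneg (min y t) - f * F (min y t))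
        - (f ^ 3 / d) * (T₁ y / (∫ ω, X ω ∂P) - F y) * (T₁ t / (∫ ω, X ω ∂P) - F t)
        - (∫ ω, X ω ∂P) *
            (Tneg y * F t + Tneg t * F y - ((∫ ω, (X ω)⁻¹ ∂P) + 1) * F y * F t))
    (C₂ : ℝ → ℝ → ℝ) (hC₂ : ∀ y t, C₂ y t = F (min y t) - F y * F t)
    (C : ℝ → ℝ → ℝ) (hC : ∀ y t, C y t = C₁ y t + f * C₂ y t) :
    ∃ K > 0, ∀ y t : ℝ, y ≤ t →
      C y y + C t t - 2 * C y t ≤ K * (F t - F y) := by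
  set A := ∫ ω, X ω ∂P
  set B := ∫ ω, (X ω)⁻¹ ∂P
  have hA : 0 ≤ A := integral_nonneg_of_ae (hXpos.mono fun _ h => h.le)
  refine ⟨A * max M 0 + |A * (B + 1) - f| + 1, by positivity, fun y t hyt => ?_⟩
  have hΔF : F t - F y = P.real (Y ⁻¹' Ioc y t) := by
    rw [hF, hF]
    exact measureReal_preimage_Iic_sub hY hyt
  have hΔT : Tneg t - Tneg y = ∫ ω in Y ⁻¹' Ioc y t, (X ω)⁻¹ ∂P := by
    rw [hTneg, hTneg]
    exact integral_ite_le_sub hY hXinvint hyt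
  have hΔT_nonneg : 0 ≤ Tneg t - Tneg y := hΔT ▸
    setIntegral_nonneg_of_ae_restrict (ae_restrict_of_ae (hXpos.mono fun _ h => (inv_pos.2 h).le))
  have hΔT_le : Tneg t - Tneg y ≤ max M 0 * (F t - F y) := by
    rw [hΔT, hΔF]
    exact (setIntegral_le_of_condExp_le hY.comap_le hXinvint hboundm1 ⟨Ioc y t, measurableSet_Ioc,
      rfl⟩).trans (mul_le_mul_of_nonneg_right (le_max_left M 0) measureReal_nonneg)
  have h_expand : C y y + C t t - 2 * C y t
      = A * (Tneg t - Tneg y) * (1 - 2 * (F t - F y))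
        - (f ^ 3 / d) * ((T₁ t / A - F t) - (T₁ y / A - F y)) ^ 2
        + (A * (B + 1) - f) * (F t - F y) ^ 2 := by
    simp only [hC, hC₁, hC₂, min_self, min_eq_left hyt]
    ring
  have hΔF_nonneg : 0 ≤ F t - F y := hΔF ▸ measureReal_nonneg
  have hsq_nonneg : 0 ≤ (f ^ 3 / d) * ((T₁ t / A - F t) - (T₁ y / A - F y)) ^ 2 := by
    have := hf.1
    positivity
  rw [h_expand]
  exact (kernel_increment_le hA hΔT_nonneg hΔT_le hΔF_nonneg (hΔF ▸ measureReal_le_one)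
    hsq_nonneg).trans (mul_le_mul_of_nonneg_right (by linarith) hΔF_nonneg)

/-- Increment bound for the covariance kernel `C = C₁ + f C₂` of the limiting Hájek
empirical process: there is a constant `K > 0` such that, for `y ≤ t`,
`C(y,y) + C(t,t) − 2C(y,t) ≤ K (F(t) − F(y))`. -/
theorem covariance_kernel_increment_bound
    {Ω : Type*} [MeasurableSpace Ω] (P : Measure Ω) [IsProbabilityMeasure P]
    (X Y : Ω → ℝ) (hX : Measurable X) (hY : Measurable Y)
    (hXpos : ∀ᵐ ω ∂P, 0 < X ω)
    (hXint : Integrable X P)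
    (hXinvint : Integrable (fun ω => (X ω)⁻¹) P)
    (M : ℝ)
    (hbound1 : ∀ᵐ ω ∂P,
      (P[X | MeasurableSpace.comap Y Real.measurableSpace]) ω ≤ M)
    (hboundm1 : ∀ᵐ ω ∂P,
      (P[(fun ω => (X ω)⁻¹) | MeasurableSpace.comap Y Real.measurableSpace]) ω ≤ M)
    (f d : ℝ) (hf : f ∈ Set.Ioo (0:ℝ) 1) (hd : 0 < d)
    (F : ℝ → ℝ) (hF : ∀ y, F y = (P {ω | Y ω ≤ y}).toReal)
    (T₁ : ℝ → ℝ) (hT₁ : ∀ y, T₁ y = ∫ ω, (if Y ω ≤ y then X ω else 0) ∂P)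
    (Tneg : ℝ → ℝ) (hTneg : ∀ y, Tneg y = ∫ ω, (if Y ω ≤ y then (X ω)⁻¹ else 0) ∂P)
    (C₁ : ℝ → ℝ → ℝ)
    (hC₁ : ∀ y t, C₁ y t =
      ((∫ ω, X ω ∂P) * Tneg (min y t) - f * F (min y t))
        - (f ^ 3 / d) * (T₁ y / (∫ ω, X ω ∂P) - F y) * (T₁ t / (∫ ω, X ω ∂P) - F t)
        - (∫ ω, X ω ∂P) *
            (Tneg y * F t + Tneg t * F y - ((∫ ω, (X ω)⁻¹ ∂P) + 1) * F y * F t))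
    (C₂ : ℝ → ℝ → ℝ) (hC₂ : ∀ y t, C₂ y t = F (min y t) - F y * F t)
    (C : ℝ → ℝ → ℝ) (hC : ∀ y t, C y t = C₁ y t + f * C₂ y t) :
    ∃ K > 0, ∀ y t : ℝ, y ≤ t →
      C y y + C t t - 2 * C y t ≤ K * (F t - F y) :=
  covariance_kernel_increment_bound_general P X Y hY hXpos hXinvint M hboundm1 f d hf hd F hF T₁
    Tneg hTneg C₁ hC₁ C₂ hC₂ C hC
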